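/- There exists ψ ∈ 𝒪_M(ℝ) which has no fixed points and satisfies ψ'(x) > 0 for every x ∈ ℝ, such that the composition operator C_ψ : 𝒪_M(ℝ) → 𝒪_M(ℝ) is not mixing. -/

import Mathlib

open Filter Topology Set

noncomputable section

/-- A smooth real function is *slowly increasing* if each of its derivatives
grows at most polynomially. -/
def SlowlyIncreasing (f : ℝ → ℝ) : Prop :=
  ContDiff ℝ (⊤ : ℕ∞) f ∧
    ∀ j : ℕ, ∃ C : ℝ, 0 < C ∧ ∃ n : ℕ, ∀ x : ℝ,
      |iteratedDeriv j f x| ≤ C * (1 + x ^ 2) ^ n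

/-- The space `𝒪_M(ℝ)` of slowly increasing smooth functions. -/
structure OM : Type where
  toFun : ℝ → ℝ
  slowly : SlowlyIncreasing toFun

/-- The seminorm `p_{m,v}`, evaluated on a plain function. -/
def pOM (m : ℕ) (v : SchwartzMap ℝ ℝ) (f : ℝ → ℝ) : ℝ :=
  ⨆ (x : ℝ) (j : Fin (m + 1)), |v x * iteratedDeriv j.1 f x|

/-- The natural locally convex topology of `𝒪_M(ℝ)`, generated by the balls of the
seminorms `p_{m,v}`. -/
instance : TopologicalSpace OM :=
  TopologicalSpace.generateFrom
    { U : Set OM | ∃ (g : OM) (m : ℕ) (v : SchwartzMap ℝ ℝ) (ε : ℝ), 0 < ε ∧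
        U = { f : OM | pOM m v (fun x => f.toFun x - g.toFun x) < ε } }

/-- Topological transitivity. -/
def TopologicallyTransitive {X : Type*} [TopologicalSpace X] (T : X → X) : Prop :=
  ∀ U V : Set X, IsOpen U → IsOpen V → U.Nonempty → V.Nonempty →
    ∃ n : ℕ, 0 < n ∧ (T^[n] '' U ∩ V).Nonempty

/-- Topological mixing. -/
def TopologicallyMixing {X : Type*} [TopologicalSpace X] (T : X → X) : Prop :=
  ∀ U V : Set X, IsOpen U → IsOpen V → U.Nonempty → V.Nonempty →
    ∃ N : ℕ, ∀ n : ℕ, N ≤ n → (T^[n] '' U ∩ V).Nonempty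

/-- Sequential hypercyclicity: some orbit is sequentially dense. -/
def SequentiallyHypercyclic {X : Type*} [TopologicalSpace X] (T : X → X) : Prop :=
  ∃ g : X, ∀ f : X, ∃ u : ℕ → X,
    (∀ i : ℕ, ∃ n : ℕ, 0 < n ∧ u i = T^[n] g) ∧ Tendsto u atTop (𝓝 f)

/-- Hypercyclicity: some orbit is dense. -/
def Hypercyclic {X : Type*} [TopologicalSpace X] (T : X → X) : Prop :=
  ∃ g : X, Dense { x : X | ∃ n : ℕ, 0 < n ∧ x = T^[n] g }

/-- Chaos: topological transitivity together with a dense set of periodic points. -/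
def Chaotic {X : Type*} [TopologicalSpace X] (T : X → X) : Prop :=
  TopologicallyTransitive T ∧ Dense { x : X | ∃ n : ℕ, 0 < n ∧ T^[n] x = x }


section AuxProof
open Real Polynomial

def gauss (a : ℝ) : ℝ → ℝ := fun x => Real.exp (-(a * x ^ 2))

lemma gauss_pos (a x : ℝ) : 0 < gauss a x := Real.exp_pos _

lemma gauss_le_one {a : ℝ} (ha : 0 ≤ a) (x : ℝ) : gauss a x ≤ 1 := by
  rw [gauss, Real.exp_le_one_iff]
  nlinarith [sq_nonneg x]

lemma contDiff_gauss (a : ℝ) {n : WithTop ℕ∞} : ContDiff ℝ n (gauss a) := by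
  exact Real.contDiff_exp.comp ((contDiff_const.mul (contDiff_id.pow 2)).neg)

lemma hasDerivAt_gauss (a x : ℝ) : HasDerivAt (gauss a) (-(2 * a * x) * gauss a x) x := by
  have h1 : HasDerivAt (fun x : ℝ => -(a * x ^ 2)) (-(2 * a * x)) x := by
    simpa [mul_comm, mul_assoc, mul_left_comm] using
      (((hasDerivAt_pow 2 x).const_mul a).fun_neg)
  have h2 := h1.exp
  convert h2 using 1
  · rfl
  · simp only [gauss]; ring

-- monomial * gaussian bounded
lemma pow_mul_gauss_le {a : ℝ} (ha : 0 < a) (m : ℕ) :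
    ∃ C : ℝ, 0 < C ∧ ∀ x : ℝ, |x| ^ m * gauss a x ≤ C := by
  refine ⟨max 1 (m.factorial / a ^ m), lt_max_of_lt_left one_pos, fun x => ?_⟩
  rcases le_total (|x|) 1 with h | h
  · calc |x| ^ m * gauss a x ≤ 1 ^ m * 1 := by
          apply mul_le_mul (pow_le_pow_left₀ (abs_nonneg x) h m) (gauss_le_one ha.le x)
            (gauss_pos a x).le (by norm_num)
        _ ≤ _ := by simpa using le_max_left 1 _
  · have hx2 : (1:ℝ) ≤ x ^ 2 := by nlinarith [abs_nonneg x, sq_abs x]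
    have key : (a * x ^ 2) ^ m / m.factorial ≤ Real.exp (a * x ^ 2) := by
      have := Real.sum_le_exp_of_nonneg (by positivity : (0:ℝ) ≤ a * x ^ 2) (m + 1)
      calc (a * x ^ 2) ^ m / m.factorial
          ≤ ∑ i ∈ Finset.range (m + 1), (a * x ^ 2) ^ i / i.factorial := by
            exact Finset.single_le_sum (f := fun i => (a * x ^ 2) ^ i / i.factorial)
              (fun i _ => by positivity) (Finset.self_mem_range_succ m)
        _ ≤ _ := this
    have hg : gauss a x ≤ m.factorial / (a * x ^ 2) ^ m := by
      have hfac : (0:ℝ) < m.factorial := by positivity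
      have h2 : (a * x ^ 2) ^ m ≤ m.factorial * Real.exp (a * x ^ 2) := by
        rw [div_le_iff₀ hfac] at key; linarith
      rw [gauss, Real.exp_neg, ← one_div, div_le_div_iff₀ (Real.exp_pos _) (by positivity)]
      linarith
    have hxm : |x| ^ m ≤ (x ^ 2) ^ m :=
      pow_le_pow_left₀ (abs_nonneg x) (by nlinarith [sq_abs x]) m
    calc |x| ^ m * gauss a x ≤ (x ^ 2) ^ m * (m.factorial / (a * x ^ 2) ^ m) := by
          apply mul_le_mul hxm hg (gauss_pos a x).le (by positivity)
      _ = m.factorial / a ^ m := by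
          field_simp [mul_pow]
          ring
      _ ≤ _ := le_max_right _ _

lemma poly_mul_gauss_le {a : ℝ} (ha : 0 < a) (p : Polynomial ℝ) :
    ∃ C : ℝ, 0 < C ∧ ∀ x : ℝ, |p.eval x| * gauss a x ≤ C := by
  induction p using Polynomial.induction_on with
  | C c =>
      obtain ⟨B, hB, h⟩ := pow_mul_gauss_le ha 0
      refine ⟨(|c| + 1) * B, by positivity, fun x => ?_⟩
      have hx := h x
      simp only [pow_zero, one_mul] at hx
      simp only [eval_C]
      have h1 : |c| * gauss a x ≤ |c| * B :=
        mul_le_mul_of_nonneg_left hx (abs_nonneg c)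
      nlinarith [gauss_pos a x, abs_nonneg c]
  | add p q hp hq =>
      obtain ⟨C1, hC1, h1⟩ := hp
      obtain ⟨C2, hC2, h2⟩ := hq
      refine ⟨C1 + C2, by positivity, fun x => ?_⟩
      calc |(p + q).eval x| * gauss a x ≤ (|p.eval x| + |q.eval x|) * gauss a x := by
            apply mul_le_mul_of_nonneg_right _ (gauss_pos a x).le
            simpa using abs_add_le _ _
        _ = |p.eval x| * gauss a x + |q.eval x| * gauss a x := by ring
        _ ≤ C1 + C2 := add_le_add (h1 x) (h2 x)
  | monomial n c _ =>
      obtain ⟨B, hB, h⟩ := pow_mul_gauss_le ha (n + 1)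
      refine ⟨(|c| + 1) * B, by positivity, fun x => ?_⟩
      have heq : |(Polynomial.C c * X ^ (n+1) : Polynomial ℝ).eval x| * gauss a x
          = |c| * (|x| ^ (n+1) * gauss a x) := by
        simp only [eval_mul, eval_C, eval_pow, eval_X]
        rw [abs_mul, abs_pow, mul_assoc]
      rw [heq]
      have h1 : |c| * (|x| ^ (n+1) * gauss a x) ≤ |c| * B :=
        mul_le_mul_of_nonneg_left (h x) (abs_nonneg c)
      nlinarith [abs_nonneg c, hB]

lemma iteratedDeriv_gauss {a : ℝ} (n : ℕ) :
    ∃ p : Polynomial ℝ, ∀ x, iteratedDeriv n (gauss a) x = p.eval x * gauss a x := by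
  induction n with
  | zero => exact ⟨1, fun x => by simp [iteratedDeriv_zero]⟩
  | succ n ih =>
      obtain ⟨p, hp⟩ := ih
      refine ⟨p.derivative - Polynomial.C (2*a) * X * p, fun x => ?_⟩
      rw [iteratedDeriv_succ]
      have : deriv (iteratedDeriv n (gauss a)) x = deriv (fun y => p.eval y * gauss a y) x := by
        congr 1
        funext y; exact hp y
      rw [this]
      have hd : HasDerivAt (fun y => p.eval y * gauss a y)
          (p.derivative.eval x * gauss a x + p.eval x * (-(2 * a * x) * gauss a x)) x :=
        (p.hasDerivAt x).mul (hasDerivAt_gauss a x)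
      rw [hd.deriv]
      simp only [eval_sub, eval_mul, eval_C, eval_X]
      ring

def gaussSchwartz (a : ℝ) (ha : 0 < a) : SchwartzMap ℝ ℝ where
  toFun := gauss a
  smooth' := contDiff_gauss a
  decay' := by
    intro k n
    obtain ⟨p, hp⟩ := iteratedDeriv_gauss (a := a) n
    obtain ⟨C, hC, h⟩ := poly_mul_gauss_le ha (X ^ k * p)
    refine ⟨C, fun x => ?_⟩
    rw [norm_iteratedFDeriv_eq_norm_iteratedDeriv, hp x]
    have hgx := (gauss_pos a x).le
    calc ‖x‖ ^ k * ‖p.eval x * gauss a x‖ = |((X:Polynomial ℝ) ^ k * p).eval x| * gauss a x := by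
          rw [Real.norm_eq_abs, Real.norm_eq_abs, abs_mul, abs_of_nonneg hgx]
          simp only [eval_mul, eval_pow, eval_X, abs_mul, abs_pow]
          ring
      _ ≤ C := h x

lemma one_le_one_add_sq (x : ℝ) : (1:ℝ) ≤ 1 + x ^ 2 := by nlinarith [sq_nonneg x]

lemma iteratedDeriv_zero_fun (j : ℕ) : iteratedDeriv j (fun _ : ℝ => (0:ℝ)) = fun _ => 0 := by
  funext x
  rw [iteratedDeriv_eq_iteratedFDeriv, iteratedFDeriv_zero_fun]
  simp

lemma iteratedDeriv_const_fun (j : ℕ) (c : ℝ) (hj : j ≠ 0) :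
    iteratedDeriv j (fun _ : ℝ => c) = fun _ => 0 := by
  obtain ⟨n, rfl⟩ := Nat.exists_eq_succ_of_ne_zero hj
  rw [iteratedDeriv_succ', deriv_const']
  exact iteratedDeriv_zero_fun n

lemma slowly_const (c : ℝ) : SlowlyIncreasing (fun _ => c) := by
  refine ⟨contDiff_const, fun j => ⟨|c| + 1, by positivity, 0, fun x => ?_⟩⟩
  rcases Nat.eq_zero_or_pos j with rfl | hj
  · simp only [iteratedDeriv_zero, pow_zero, mul_one]
    nlinarith [abs_nonneg c]
  · rw [iteratedDeriv_const_fun j c (by omega)]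
    simp
    positivity

lemma slowly_id : SlowlyIncreasing (fun x : ℝ => x) := by
  refine ⟨contDiff_id, fun j => ⟨1, one_pos, 1, fun x => ?_⟩⟩
  match j with
  | 0 =>
      rw [iteratedDeriv_zero]
      have h1 : |x| ≤ 1 + x ^ 2 := by nlinarith [sq_abs x, abs_nonneg x, sq_nonneg (|x| - 1)]
      calc |x| ≤ 1 + x ^ 2 := h1
        _ = 1 * (1 + x ^ 2) ^ 1 := by ring
  | 1 => rw [iteratedDeriv_one, deriv_id'']
         simpa using by nlinarith [sq_nonneg x]
  | (n+2) =>
      rw [iteratedDeriv_succ', deriv_id'', iteratedDeriv_const_fun (n+1) 1 (by omega)]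
      simp
      positivity

lemma SlowlyIncreasing.sub {f g : ℝ → ℝ} (hf : SlowlyIncreasing f) (hg : SlowlyIncreasing g) :
    SlowlyIncreasing (fun x => f x - g x) := by
  refine ⟨hf.1.sub hg.1, fun j => ?_⟩
  obtain ⟨C1, hC1, n1, h1⟩ := hf.2 j
  obtain ⟨C2, hC2, n2, h2⟩ := hg.2 j
  refine ⟨C1 + C2, by positivity, max n1 n2, fun x => ?_⟩
  have key : iteratedDeriv j (fun x => f x - g x) x = iteratedDeriv j f x - iteratedDeriv j g x := by
    have h0 : (fun x => f x - g x) = f + -g := by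
      funext y; simp [sub_eq_add_neg]
    have hsub : iteratedFDeriv ℝ j (f + -g) x
        = iteratedFDeriv ℝ j f x + iteratedFDeriv ℝ j (-g) x :=
      iteratedFDeriv_add_apply (hf.1.of_le (by exact_mod_cast le_top)).contDiffAt ((hg.1.of_le (by exact_mod_cast le_top)).neg).contDiffAt
    rw [h0, iteratedDeriv_eq_iteratedFDeriv, iteratedDeriv_eq_iteratedFDeriv,
      iteratedDeriv_eq_iteratedFDeriv, hsub, iteratedFDeriv_neg_apply]
    simp [sub_eq_add_neg]
  rw [key]
  have e1 : (1 + x ^ 2) ^ n1 ≤ (1 + x ^ 2) ^ max n1 n2 :=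
    pow_le_pow_right₀ (one_le_one_add_sq x) (le_max_left _ _)
  have e2 : (1 + x ^ 2) ^ n2 ≤ (1 + x ^ 2) ^ max n1 n2 :=
    pow_le_pow_right₀ (one_le_one_add_sq x) (le_max_right _ _)
  calc |iteratedDeriv j f x - iteratedDeriv j g x| ≤ |iteratedDeriv j f x| + |iteratedDeriv j g x| :=
        abs_sub _ _
    _ ≤ C1 * (1 + x ^ 2) ^ n1 + C2 * (1 + x ^ 2) ^ n2 := add_le_add (h1 x) (h2 x)
    _ ≤ (C1 + C2) * (1 + x ^ 2) ^ max n1 n2 := by nlinarith [e1, e2, hC1.le, hC2.le]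

lemma SlowlyIncreasing.add {f g : ℝ → ℝ} (hf : SlowlyIncreasing f) (hg : SlowlyIncreasing g) :
    SlowlyIncreasing (fun x => f x + g x) := by
  have := hf.sub ⟨hg.1.neg, by
    intro j
    obtain ⟨C, hC, n, h⟩ := hg.2 j
    refine ⟨C, hC, n, fun x => ?_⟩
    have : iteratedDeriv j (fun x => -g x) x = -iteratedDeriv j g x := by
      rw [iteratedDeriv_eq_iteratedFDeriv, iteratedDeriv_eq_iteratedFDeriv,
        show (fun x => -g x) = -g from rfl, iteratedFDeriv_neg_apply]
      simp
    rw [this, abs_neg]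
    exact h x⟩
  simpa [sub_neg_eq_add] using this

lemma SlowlyIncreasing.const_mul {f : ℝ → ℝ} (hf : SlowlyIncreasing f) (c : ℝ) :
    SlowlyIncreasing (fun x => c * f x) := by
  refine ⟨(contDiff_const (c := c)).mul hf.1, fun j => ?_⟩
  obtain ⟨C, hC, n, h⟩ := hf.2 j
  refine ⟨(|c| + 1) * C, by positivity, n, fun x => ?_⟩
  have key : iteratedDeriv j (fun x => c * f x) x = c * iteratedDeriv j f x := by
    rw [iteratedDeriv_eq_iteratedFDeriv, iteratedDeriv_eq_iteratedFDeriv,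
      show (fun x => c * f x) = c • f from rfl,
      iteratedFDeriv_const_smul_apply (hf.1.of_le (by exact_mod_cast le_top)).contDiffAt]
    simp
  rw [key, abs_mul]
  have := h x
  have h1 : |c| * |iteratedDeriv j f x| ≤ |c| * (C * (1 + x ^ 2) ^ n) :=
    mul_le_mul_of_nonneg_left this (abs_nonneg c)
  nlinarith [abs_nonneg c, hC, pow_pos (lt_of_lt_of_le one_pos (one_le_one_add_sq x)) n]

lemma slowly_gauss {a : ℝ} (ha : 0 < a) : SlowlyIncreasing (gauss a) := by
  refine ⟨contDiff_gauss a, fun j => ?_⟩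
  obtain ⟨p, hp⟩ := iteratedDeriv_gauss (a := a) j
  obtain ⟨C, hC, h⟩ := poly_mul_gauss_le ha p
  refine ⟨C, hC, 0, fun x => ?_⟩
  rw [hp x]
  simp only [pow_zero, mul_one]
  calc |p.eval x * gauss a x| = |p.eval x| * gauss a x := by
        rw [abs_mul, abs_of_nonneg (gauss_pos a x).le]
    _ ≤ C := h x

def psiFun : ℝ → ℝ := fun x => x + (1/2) * gauss 2 x

lemma slowly_psi : SlowlyIncreasing psiFun :=
  slowly_id.add ((slowly_gauss (by norm_num)).const_mul (1/2))

def psiD : ℝ → ℝ := fun x => 1 - 2 * x * gauss 2 x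

lemma hasDerivAt_psi (x : ℝ) : HasDerivAt psiFun (psiD x) x := by
  have h1 : HasDerivAt (fun y : ℝ => y) 1 x := hasDerivAt_id x
  have h2 := (hasDerivAt_gauss 2 x).const_mul (1/2)
  have := h1.add h2
  refine this.congr_deriv ?_
  unfold psiD
  ring

lemma psiD_pos (x : ℝ) : 0 < psiD x := by
  unfold psiD
  rcases le_or_gt x 0 with hx | hx
  · nlinarith [gauss_pos 2 x, gauss_le_one (by norm_num : (0:ℝ) ≤ 2) x, mul_nonpos_of_nonpos_of_nonneg (by linarith : 2*x ≤ 0) (gauss_pos 2 x).le]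
  · have h1 : gauss 2 x ≤ 1 / (1 + 2 * x ^ 2) := by
      have he : 1 + 2 * x ^ 2 ≤ Real.exp (2 * x ^ 2) := by
        have := Real.add_one_le_exp (2 * x ^ 2); linarith
      rw [gauss, Real.exp_neg, inv_eq_one_div]
      exact one_div_le_one_div_of_le (by nlinarith) he
    have h2 : 2 * x * gauss 2 x ≤ 2 * x / (1 + 2 * x ^ 2) := by
      rw [div_eq_mul_one_div]
      exact mul_le_mul_of_nonneg_left h1 (by linarith)
    have h3 : 2 * x / (1 + 2 * x ^ 2) < 1 := by
      rw [div_lt_one (by nlinarith)]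
      nlinarith [sq_nonneg (x - 1), sq_nonneg x]
    linarith

lemma psiD_le_one {x : ℝ} (hx : 0 ≤ x) : psiD x ≤ 1 := by
  unfold psiD
  nlinarith [gauss_pos 2 x, mul_nonneg (mul_nonneg (by norm_num : (0:ℝ) ≤ 2) hx) (gauss_pos 2 x).le]

def XX : ℕ → ℝ := fun n => psiFun^[n] 0
def dd : ℕ → ℝ := fun n => (1/2) * gauss 2 (XX n)
def PP : ℕ → ℝ := fun n => ∏ k ∈ Finset.range n, psiD (XX k)

lemma XX_zero : XX 0 = 0 := rfl

lemma XX_succ (n : ℕ) : XX (n + 1) = XX n + dd n := by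
  rw [XX, Function.iterate_succ_apply']
  rfl

lemma dd_pos (n : ℕ) : 0 < dd n := by
  unfold dd; have := gauss_pos 2 (XX n); linarith

lemma dd_le_half (n : ℕ) : dd n ≤ 1/2 := by
  unfold dd; have := gauss_le_one (by norm_num : (0:ℝ) ≤ 2) (XX n); linarith

lemma XX_nonneg (n : ℕ) : 0 ≤ XX n := by
  induction n with
  | zero => rw [XX_zero]
  | succ n ih => rw [XX_succ]; have := dd_pos n; linarith

lemma XX_mono {m n : ℕ} (h : m ≤ n) : XX m ≤ XX n := by
  induction n with
  | zero => simp_all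
  | succ n ih =>
      rcases Nat.lt_or_ge m (n+1) with h' | h'
      · have := ih (by omega)
        rw [XX_succ]; have := dd_pos n; linarith
      · have : m = n + 1 := by omega
        rw [this]

lemma sum_dd (n : ℕ) : ∑ k ∈ Finset.range n, dd k = XX n := by
  induction n with
  | zero => simp [XX_zero]
  | succ n ih => rw [Finset.sum_range_succ, ih, ← XX_succ]

lemma sum_identity (n : ℕ) :
    4 * (∑ k ∈ Finset.range n, XX k * dd k) + 2 * (∑ k ∈ Finset.range n, (dd k) ^ 2)
      = 2 * (XX n) ^ 2 := by
  induction n with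
  | zero => simp [XX_zero]
  | succ n ih =>
      rw [Finset.sum_range_succ, Finset.sum_range_succ, XX_succ]
      ring_nf
      ring_nf at ih
      linarith

lemma psiD_eq (k : ℕ) : psiD (XX k) = 1 - 4 * (XX k * dd k) := by
  unfold psiD dd; ring

lemma PP_le (n : ℕ) : PP n ≤ Real.exp (XX n - 2 * (XX n) ^ 2) := by
  have h1 : PP n ≤ ∏ k ∈ Finset.range n, Real.exp (-(4 * (XX k * dd k))) := by
    apply Finset.prod_le_prod
    · exact fun k _ => (psiD_pos (XX k)).le
    · intro k _
      rw [psiD_eq]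
      have := Real.add_one_le_exp (-(4 * (XX k * dd k)))
      linarith
  have h2 : ∏ k ∈ Finset.range n, Real.exp (-(4 * (XX k * dd k)))
      = Real.exp (∑ k ∈ Finset.range n, -(4 * (XX k * dd k))) := by
    rw [← Real.exp_sum]
  have h3 : ∑ k ∈ Finset.range n, -(4 * (XX k * dd k))
      = -(4 * ∑ k ∈ Finset.range n, XX k * dd k) := by
    rw [Finset.sum_neg_distrib, ← Finset.mul_sum]
  have h4 : ∑ k ∈ Finset.range n, (dd k) ^ 2 ≤ (1/2) * ∑ k ∈ Finset.range n, dd k := by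
    rw [Finset.mul_sum]
    apply Finset.sum_le_sum
    intro k _
    have h5 := dd_pos k
    have h6 := dd_le_half k
    nlinarith
  have h7 := sum_identity n
  have h8 : -(4 * ∑ k ∈ Finset.range n, XX k * dd k) ≤ XX n - 2 * (XX n) ^ 2 := by
    rw [sum_dd n] at h4
    nlinarith
  calc PP n ≤ _ := h1
    _ = _ := h2
    _ ≤ Real.exp (XX n - 2 * (XX n) ^ 2) := by
        rw [h3]; exact Real.exp_le_exp.mpr h8

lemma exists_XX_gt (M : ℝ) : ∃ n, M < XX n := by
  by_contra hc
  push_neg at hc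
  set M0 : ℝ := max M 0 with hM0
  have hub : ∀ n, XX n ≤ M0 := fun n => le_trans (hc n) (le_max_left _ _)
  set c : ℝ := (1/2) * Real.exp (-(2 * M0 ^ 2)) with hcdef
  have hcpos : 0 < c := by positivity
  have hdd : ∀ k, c ≤ dd k := by
    intro k
    unfold dd
    have h1 : (XX k) ^ 2 ≤ M0 ^ 2 := by
      have := XX_nonneg k
      have := hub k
      nlinarith
    have : Real.exp (-(2 * M0 ^ 2)) ≤ gauss 2 (XX k) := by
      rw [gauss]
      apply Real.exp_le_exp.mpr
      nlinarith
    rw [hcdef]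
    linarith
  have hlow : ∀ n : ℕ, (n : ℝ) * c ≤ XX n := by
    intro n
    calc (n : ℝ) * c = ∑ _k ∈ Finset.range n, c := by
          rw [Finset.sum_const, Finset.card_range, nsmul_eq_mul]
      _ ≤ ∑ k ∈ Finset.range n, dd k := Finset.sum_le_sum fun k _ => hdd k
      _ = XX n := sum_dd n
  obtain ⟨n, hn⟩ := exists_nat_gt (M0 / c)
  have : M0 < (n:ℝ) * c := by
    rw [div_lt_iff₀ hcpos] at hn
    linarith
  have := hlow n
  have := hub n
  linarith

lemma hasDerivAt_iterate (n : ℕ) : HasDerivAt (psiFun^[n]) (PP n) 0 := by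
  induction n with
  | zero =>
      simp only [Function.iterate_zero, PP, Finset.range_zero, Finset.prod_empty]
      exact hasDerivAt_id 0
  | succ n ih =>
      rw [Function.iterate_succ']
      have hc := (hasDerivAt_psi (XX n)).comp 0 ih
      have heq : PP (n+1) = psiD (XX n) * PP n := by
        unfold PP
        rw [Finset.prod_range_succ, mul_comm]
      rw [heq]
      exact hc

lemma schwartz_poly_bound (v : SchwartzMap ℝ ℝ) (n : ℕ) :
    ∃ K : ℝ, 0 < K ∧ ∀ x : ℝ, |v x| * (1 + x ^ 2) ^ n ≤ K := by
  obtain ⟨C0, hC0, h0⟩ := v.decay 0 0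
  obtain ⟨C2, hC2, h2⟩ := v.decay (2 * n) 0
  have h0' : ∀ x : ℝ, |v x| ≤ C0 := by
    intro x
    have := h0 x
    rwa [pow_zero, one_mul, norm_iteratedFDeriv_zero, Real.norm_eq_abs] at this
  have h2' : ∀ x : ℝ, |x| ^ (2 * n) * |v x| ≤ C2 := by
    intro x
    have := h2 x
    rwa [norm_iteratedFDeriv_zero, Real.norm_eq_abs, Real.norm_eq_abs] at this
  refine ⟨2 ^ n * (C0 + C2), by positivity, fun x => ?_⟩
  have hsplit : (1 + x ^ 2) ^ n ≤ 2 ^ n * (1 + |x| ^ (2 * n)) := by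
    rcases le_total (x ^ 2) 1 with h | h
    · have : (1 + x ^ 2) ^ n ≤ 2 ^ n := by
        apply pow_le_pow_left₀ (by nlinarith [sq_nonneg x]) (by linarith)
      nlinarith [pow_nonneg (by positivity : (0:ℝ) ≤ 2) n,
        pow_nonneg (abs_nonneg x) (2 * n)]
    · have h1 : (1 + x ^ 2) ≤ 2 * x ^ 2 := by linarith
      have h2'' : (1 + x ^ 2) ^ n ≤ (2 * x ^ 2) ^ n :=
        pow_le_pow_left₀ (by nlinarith [sq_nonneg x]) h1 n
      have h3 : (2 * x ^ 2) ^ n = 2 ^ n * |x| ^ (2 * n) := by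
        rw [mul_pow, pow_mul, sq_abs]
      rw [h3] at h2''
      nlinarith [pow_nonneg (by positivity : (0:ℝ) ≤ 2) n]
  calc |v x| * (1 + x ^ 2) ^ n ≤ |v x| * (2 ^ n * (1 + |x| ^ (2 * n))) :=
        mul_le_mul_of_nonneg_left hsplit (abs_nonneg _)
    _ = 2 ^ n * (|v x| + |x| ^ (2 * n) * |v x|) := by ring
    _ ≤ 2 ^ n * (C0 + C2) := by
        have := h0' x
        have := h2' x
        have : |v x| + |x| ^ (2 * n) * |v x| ≤ C0 + C2 := by linarith
        nlinarith [pow_nonneg (by positivity : (0:ℝ) ≤ 2) n]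

lemma pOM_bound {m : ℕ} {v : SchwartzMap ℝ ℝ} {h : ℝ → ℝ} (hs : SlowlyIncreasing h) :
    ∃ B : ℝ, 0 ≤ B ∧ ∀ (x : ℝ) (j : Fin (m + 1)), |v x * iteratedDeriv j.1 h x| ≤ B := by
  have hch : ∀ j : Fin (m + 1), ∃ C : ℝ, 0 < C ∧ ∃ n : ℕ, ∀ x : ℝ,
      |iteratedDeriv j.1 h x| ≤ C * (1 + x ^ 2) ^ n := fun j => hs.2 j.1
  choose C hC n hb using hch
  choose K hK hKb using fun j : Fin (m + 1) => schwartz_poly_bound v (n j)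
  refine ⟨∑ j : Fin (m + 1), C j * K j,
    Finset.sum_nonneg fun j _ => mul_nonneg (hC j).le (hK j).le, fun x j => ?_⟩
  have h1 : |v x * iteratedDeriv j.1 h x| ≤ C j * K j := by
    rw [abs_mul]
    calc |v x| * |iteratedDeriv j.1 h x| ≤ |v x| * (C j * (1 + x ^ 2) ^ (n j)) :=
          mul_le_mul_of_nonneg_left (hb j x) (abs_nonneg _)
      _ = C j * (|v x| * (1 + x ^ 2) ^ (n j)) := by ring
      _ ≤ C j * K j := mul_le_mul_of_nonneg_left (hKb j x) (hC j).le
  calc |v x * iteratedDeriv j.1 h x| ≤ C j * K j := h1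
    _ ≤ ∑ j' : Fin (m + 1), C j' * K j' :=
        Finset.single_le_sum (f := fun j' : Fin (m + 1) => C j' * K j')
          (fun j' _ => mul_nonneg (hC j').le (hK j').le) (Finset.mem_univ j)

lemma le_pOM {m : ℕ} {v : SchwartzMap ℝ ℝ} {h : ℝ → ℝ} (hs : SlowlyIncreasing h)
    (x0 : ℝ) (j0 : Fin (m + 1)) :
    |v x0 * iteratedDeriv j0.1 h x0| ≤ pOM m v h := by
  obtain ⟨B, hB0, hB⟩ := pOM_bound (m := m) (v := v) hs
  have hF : ∀ x : ℝ, (⨆ j : Fin (m + 1), |v x * iteratedDeriv j.1 h x|) ≤ B :=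
    fun x => ciSup_le fun j => hB x j
  have step1 : |v x0 * iteratedDeriv j0.1 h x0|
      ≤ ⨆ j : Fin (m + 1), |v x0 * iteratedDeriv j.1 h x0| :=
    le_ciSup (f := fun j : Fin (m + 1) => |v x0 * iteratedDeriv j.1 h x0|)
      (Set.finite_range _).bddAbove j0
  have step2 : (⨆ j : Fin (m + 1), |v x0 * iteratedDeriv j.1 h x0|)
      ≤ pOM m v h := by
    apply le_ciSup (f := fun x : ℝ => ⨆ j : Fin (m + 1), |v x * iteratedDeriv j.1 h x|)
    exact ⟨B, by rintro y ⟨x, rfl⟩; exact hF x⟩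
  exact step1.trans step2

lemma pOM_zero_fun (m : ℕ) (v : SchwartzMap ℝ ℝ) : pOM m v (fun _ => 0) = 0 := by
  unfold pOM
  have hin : ∀ x : ℝ, (⨆ j : Fin (m + 1), |v x * iteratedDeriv j.1 (fun _ : ℝ => (0:ℝ)) x|) = 0 := by
    intro x
    have : ∀ j : Fin (m + 1), |v x * iteratedDeriv j.1 (fun _ : ℝ => (0:ℝ)) x| = 0 := by
      intro j
      rw [iteratedDeriv_zero_fun j.1]
      simp
    simp only [this]
    exact ciSup_const
  simp only [hin]
  exact ciSup_const
end AuxProof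

section MainProof
open Real

def gaussSch : SchwartzMap ℝ ℝ := gaussSchwartz 1 one_pos
def psiOM : OM := ⟨psiFun, slowly_psi⟩
def zeroOM : OM := ⟨fun _ => 0, slowly_const 0⟩
def idOM : OM := ⟨fun x => x, slowly_id⟩

end MainProof

theorem statement7 : ∃ ψ : OM, (∀ x : ℝ, ψ.toFun x ≠ x) ∧
    (∀ x : ℝ, 0 < deriv ψ.toFun x) ∧
    ∀ T : OM → OM, (∀ f : OM, (T f).toFun = f.toFun ∘ ψ.toFun) →
      ¬ TopologicallyMixing T := by
  classical
  refine ⟨psiOM, ?_, ?_, ?_⟩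
  · intro x hx
    have hg := gauss_pos 2 x
    have : psiFun x = x := hx
    unfold psiFun at this
    linarith
  · intro x
    have hd : deriv psiFun x = psiD x := (hasDerivAt_psi x).deriv
    show 0 < deriv psiFun x
    rw [hd]
    exact psiD_pos x
  · intro T hT hmix
    set U : Set OM :=
      { f : OM | pOM 1 gaussSch (fun x => f.toFun x - zeroOM.toFun x) < 1 } with hUdef
    set V : Set OM :=
      { f : OM | pOM 1 gaussSch (fun x => f.toFun x - idOM.toFun x) < 1/2 } with hVdef
    have hUopen : IsOpen U :=
      TopologicalSpace.GenerateOpen.basic _ ⟨zeroOM, 1, gaussSch, 1, one_pos, rfl⟩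
    have hVopen : IsOpen V :=
      TopologicalSpace.GenerateOpen.basic _ ⟨idOM, 1, gaussSch, 1/2, by norm_num, rfl⟩
    have hUne : U.Nonempty := by
      refine ⟨zeroOM, ?_⟩
      show pOM 1 gaussSch (fun x => zeroOM.toFun x - zeroOM.toFun x) < 1
      have : (fun x => zeroOM.toFun x - zeroOM.toFun x) = (fun _ : ℝ => (0:ℝ)) := by
        funext y; simp
      rw [this, pOM_zero_fun]
      norm_num
    have hVne : V.Nonempty := by
      refine ⟨idOM, ?_⟩
      show pOM 1 gaussSch (fun x => idOM.toFun x - idOM.toFun x) < 1/2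
      have : (fun x => idOM.toFun x - idOM.toFun x) = (fun _ : ℝ => (0:ℝ)) := by
        funext y; simp
      rw [this, pOM_zero_fun]
      norm_num
    obtain ⟨N, hN⟩ := hmix U V hUopen hVopen hUne hVne
    obtain ⟨n1, hn1⟩ := exists_XX_gt 2
    set n : ℕ := max N n1 with hndef
    have hXn : 2 ≤ XX n := le_trans hn1.le (XX_mono (le_max_right N n1))
    obtain ⟨h, hmem⟩ := hN n (le_max_left N n1)
    obtain ⟨⟨f, hfU, hfeq⟩, hhV⟩ := hmem
    -- iterate formula
    have iter_toFun : ∀ (k : ℕ) (g : OM), (T^[k] g).toFun = g.toFun ∘ psiFun^[k] := by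
      intro k
      induction k with
      | zero => intro g; simp
      | succ k ih =>
          intro g
          rw [Function.iterate_succ_apply', hT (T^[k] g), ih g,
            Function.iterate_succ, ← Function.comp_assoc]
          rfl
    have htf : h.toFun = f.toFun ∘ psiFun^[n] := by rw [← hfeq, iter_toFun]
    -- differentiability
    have hfc : ContDiff ℝ 1 f.toFun := f.slowly.1.of_le (by simp)
    have hfd : HasDerivAt f.toFun (deriv f.toFun (XX n)) (XX n) :=
      ((hfc.differentiable one_ne_zero) (XX n)).hasDerivAt
    have hhd : HasDerivAt h.toFun (deriv f.toFun (XX n) * PP n) 0 := by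
      rw [htf]
      exact hfd.comp 0 (hasDerivAt_iterate n)
    -- bound from U
    have hfU' : pOM 1 gaussSch f.toFun < 1 := by
      have heq : (fun x => f.toFun x - zeroOM.toFun x) = f.toFun := by
        funext y; simp [zeroOM]
      have := hfU
      rw [hUdef] at this
      simpa [heq] using this
    have hboundU : |gaussSch (XX n) * iteratedDeriv 1 f.toFun (XX n)| ≤ pOM 1 gaussSch f.toFun :=
      le_pOM f.slowly (XX n) (⟨1, by omega⟩ : Fin 2)
    have hg1 : (gaussSch : ℝ → ℝ) = gauss 1 := rfl
    have hgpos : 0 < gauss 1 (XX n) := gauss_pos 1 (XX n)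
    have hderivf : gauss 1 (XX n) * |deriv f.toFun (XX n)| < 1 := by
      have h1 : |gaussSch (XX n) * iteratedDeriv 1 f.toFun (XX n)| < 1 :=
        lt_of_le_of_lt hboundU hfU'
      rw [iteratedDeriv_one] at h1
      rw [hg1] at h1
      rwa [abs_mul, abs_of_pos hgpos] at h1
    -- PP positivity and bound
    have hPPpos : 0 < PP n := Finset.prod_pos fun k _ => psiD_pos (XX k)
    have hPPle : PP n ≤ Real.exp (XX n - 2 * (XX n) ^ 2) := PP_le n
    -- |deriv h 0| < 1/2
    have hD : |deriv f.toFun (XX n) * PP n| < 1/2 := by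
      rw [abs_mul, abs_of_pos hPPpos]
      have hw : |deriv f.toFun (XX n)| < (gauss 1 (XX n))⁻¹ := by
        have h4 := mul_lt_mul_of_pos_left hderivf (inv_pos.mpr hgpos)
        rwa [← mul_assoc, inv_mul_cancel₀ hgpos.ne', one_mul, mul_one] at h4
      have hAinv : (gauss 1 (XX n))⁻¹ = Real.exp ((XX n) ^ 2) := by
        have hA : gauss 1 (XX n) = Real.exp (-(1 * (XX n) ^ 2)) := rfl
        rw [hA, Real.exp_neg, inv_inv, one_mul]
      rw [hAinv] at hw
      have hchain : |deriv f.toFun (XX n)| * PP n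
          < Real.exp ((XX n) ^ 2) * Real.exp (XX n - 2 * (XX n) ^ 2) :=
        mul_lt_mul hw hPPle hPPpos (Real.exp_pos _).le
      have hfinal : Real.exp ((XX n) ^ 2) * Real.exp (XX n - 2 * (XX n) ^ 2) ≤ 1/3 := by
        rw [← Real.exp_add]
        have harg : (XX n) ^ 2 + (XX n - 2 * (XX n) ^ 2) ≤ -2 := by nlinarith
        have hstep : Real.exp ((XX n) ^ 2 + (XX n - 2 * (XX n) ^ 2)) ≤ Real.exp (-2) :=
          Real.exp_le_exp.mpr harg
        have h3 : (3:ℝ) ≤ Real.exp 2 := by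
          have := Real.add_one_le_exp (2:ℝ); linarith
        have : Real.exp (-2) ≤ 1/3 := by
          rw [Real.exp_neg]
          calc (Real.exp 2)⁻¹ ≤ (3:ℝ)⁻¹ := by
                apply inv_anti₀ (by norm_num) h3
            _ = 1/3 := by norm_num
        linarith
      linarith
    -- bound from V
    have hs2 : SlowlyIncreasing (fun x => h.toFun x - idOM.toFun x) :=
      h.slowly.sub slowly_id
    have hboundV : |gaussSch 0 * iteratedDeriv 1 (fun x => h.toFun x - idOM.toFun x) 0|
        ≤ pOM 1 gaussSch (fun x => h.toFun x - idOM.toFun x) :=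
      le_pOM hs2 0 (⟨1, by omega⟩ : Fin 2)
    have hhV' : pOM 1 gaussSch (fun x => h.toFun x - idOM.toFun x) < 1/2 := hhV
    have hdsub : HasDerivAt (fun x => h.toFun x - idOM.toFun x)
        (deriv f.toFun (XX n) * PP n - 1) 0 := by
      exact hhd.sub (hasDerivAt_id 0)
    have hg0 : (gaussSch : ℝ → ℝ) 0 = 1 := by
      rw [hg1]
      show Real.exp (-(1 * 0 ^ 2)) = 1
      norm_num
    have hfar : |deriv f.toFun (XX n) * PP n - 1| < 1/2 := by
      have h2 := lt_of_le_of_lt hboundV hhV'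
      rw [iteratedDeriv_one, hdsub.deriv, hg0, one_mul] at h2
      exact h2
    set D : ℝ := deriv f.toFun (XX n) * PP n with hDdef
    have e1 : 1 - D ≤ |D - 1| := by
      rw [abs_sub_comm]
      exact le_abs_self _
    have e2 : D ≤ |D| := le_abs_self D
    linarith

end
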